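/- arXiv:1709.02359 — 2 statements merged into one kernel-verified Lean document; each statement's English description precedes it below -/
import Mathlib

section
/- For the periodic random walk on the N-dimensional hypercube, the number of index sequences (i₁,...,i_{2l}) ∈ {1,...,N}^{2l} realizing a first return in exactly 2l steps satisfies |J_l| ≤ 2 N^{2l-2}, since given the first 2l-2 coordinates, the last two coordinates are determined up to a permutation. -/
/-- The letters of the word `x` lying in index positions `a ≤ k ≤ b` all appear an even
number of times there. -/
def EvenOn {N L : ℕ} (x : Fin L → Fin N) (a b : ℕ) : Prop :=
  ∀ j : Fin N,
    Even ((Finset.univ.filter fun k : Fin L => a ≤ (k : ℕ) ∧ (k : ℕ) ≤ b ∧ x k = j)).card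

open scoped Classical in
/-- `Jset N l` is the set of index words `(i₁, …, i_{2l}) ∈ {1,…,N}^{2l}` realizing a
first return in exactly `2l` steps: every letter appears an even number of times, and no
proper contiguous subword other than the whole word has this property. -/
noncomputable def Jset (N l : ℕ) : Finset (Fin (2 * l) → Fin N) :=
  Finset.univ.filter fun x =>
    EvenOn x 0 (2 * l - 1) ∧
      ∀ a b : ℕ, a ≤ b → b ≤ 2 * l - 1 → (a, b) ≠ (0, 2 * l - 1) → ¬EvenOn x a b


/-! A first-return word `x` of length `2l ≥ 4` ends in two distinct letters, since two equal
letters at the end would already form an even subword. As every letter occurs an even number of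
times in `x`, these last two letters are exactly the letters occurring an odd number of times
among the first `2l - 2`. Hence `x` is determined by its first `2l - 2` letters together with the
relative order of its last two letters. -/

open Finset

section Words

variable {N L : ℕ} (x : Fin L → Fin N)

theorem evenOn_of_eq_of_succ {a b : ℕ} (hb : b < L) (hab : b = a + 1)
    (h : x ⟨a, by omega⟩ = x ⟨b, hb⟩) : EvenOn x a b := by
  intro j
  have hpos : (univ.filter fun k : Fin L => a ≤ (k : ℕ) ∧ (k : ℕ) ≤ b) =
      {⟨a, by omega⟩, ⟨b, hb⟩} := by
    ext k; simp only [mem_filter, mem_univ, true_and, mem_insert, mem_singleton, Fin.ext_iff]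
    omega
  simp_rw [← and_assoc]
  rw [← filter_filter, hpos, filter_insert, filter_singleton, ← h]
  split_ifs
  · rw [card_pair (by simp [Fin.ext_iff]; omega)]; exact even_two
  · exact Even.zero

theorem eq_or_eq_iff_odd_card_filter_lt (hL : 2 ≤ L) (hx : EvenOn x 0 (L - 1))
    (hne : x ⟨L - 2, by omega⟩ ≠ x ⟨L - 1, by omega⟩) (j : Fin N) :
    (x ⟨L - 2, by omega⟩ = j ∨ x ⟨L - 1, by omega⟩ = j) ↔
      Odd #(univ.filter fun k : Fin L => (k : ℕ) < L - 2 ∧ x k = j) := by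
  have htail : (univ.filter fun k : Fin L => ¬ (k : ℕ) < L - 2) =
      {⟨L - 2, by omega⟩, ⟨L - 1, by omega⟩} := by
    ext k; simp only [mem_filter, mem_univ, true_and, mem_insert, mem_singleton, Fin.ext_iff]
    omega
  have hsplit := card_filter_add_card_filter_not (s := univ.filter (x · = j))
    (fun k : Fin L => (k : ℕ) < L - 2)
  rw [filter_comm, filter_filter, filter_comm, htail, filter_insert, filter_singleton] at hsplit
  have htotal : Even #(univ.filter (x · = j)) := by
    simpa [Nat.le_sub_one_iff_lt (by omega : 0 < L)] using hx j
  rw [← hsplit] at htotal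
  by_cases hA : x ⟨L - 2, by omega⟩ = j
  · have hB : x ⟨L - 1, by omega⟩ ≠ j := hA ▸ hne.symm
    simp only [hA, hB, if_true, if_false] at htotal
    simpa [hA] using Nat.even_add_one.mp htotal
  · by_cases hB : x ⟨L - 1, by omega⟩ = j
    · simp only [hA, hB, if_true, if_false, card_singleton] at htotal
      simpa [hB] using Nat.even_add_one.mp htotal
    · simp only [hA, hB, if_false, card_empty, add_zero] at htotal
      simpa [hA, hB] using htotal

end Words

theorem eq_and_eq_of_forall_eq_or_eq_iff {α : Type*} [LinearOrder α] {a b c d : α}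
    (hab : a ≠ b) (h : ∀ j, a = j ∨ b = j ↔ c = j ∨ d = j) (hlt : a < b ↔ c < d) :
    a = c ∧ b = d := by
  have ha := (h a).mp (Or.inl rfl)
  have hb := (h b).mp (Or.inr rfl)
  have hc := (h c).mpr (Or.inl rfl)
  grind

theorem mem_Jset {N l : ℕ} {x : Fin (2 * l) → Fin N} : x ∈ Jset N l ↔ EvenOn x 0 (2 * l - 1) ∧
    ∀ a b : ℕ, a ≤ b → b ≤ 2 * l - 1 → (a, b) ≠ (0, 2 * l - 1) → ¬EvenOn x a b := by
  simp [Jset]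

namespace Jset

variable {N l : ℕ} {x y : Fin (2 * l) → Fin N}

theorem penultimate_ne_last (hl : 2 ≤ l) (hx : x ∈ Jset N l) :
    x ⟨2 * l - 2, by omega⟩ ≠ x ⟨2 * l - 1, by omega⟩ := fun h =>
  (mem_Jset.mp hx).2 _ _ (by omega) le_rfl (by simp; omega)
    (evenOn_of_eq_of_succ x _ (by omega) h)

theorem eq_of_eqOn_prefix (hl : 2 ≤ l) (hx : x ∈ Jset N l) (hy : y ∈ Jset N l)
    (hpre : ∀ k : Fin (2 * l), (k : ℕ) < 2 * l - 2 → x k = y k)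
    (hlt : x ⟨2 * l - 2, by omega⟩ < x ⟨2 * l - 1, by omega⟩ ↔
      y ⟨2 * l - 2, by omega⟩ < y ⟨2 * l - 1, by omega⟩) :
    x = y := by
  have hcount (j : Fin N) :
      (univ.filter fun k : Fin (2 * l) => (k : ℕ) < 2 * l - 2 ∧ x k = j) =
        univ.filter fun k : Fin (2 * l) => (k : ℕ) < 2 * l - 2 ∧ y k = j :=
    filter_congr fun k _ => and_congr_right fun hk => by rw [hpre k hk]
  have hodd {z : Fin (2 * l) → Fin N} (hz : z ∈ Jset N l) :=
    eq_or_eq_iff_odd_card_filter_lt z (by omega) (mem_Jset.mp hz).1 (penultimate_ne_last hl hz)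
  have hlast := eq_and_eq_of_forall_eq_or_eq_iff (penultimate_ne_last hl hx)
    (fun j => by rw [hodd hx, hodd hy, hcount]) hlt
  funext k
  by_cases hk : (k : ℕ) < 2 * l - 2
  · exact hpre k hk
  obtain hk | hk : (k : ℕ) = 2 * l - 2 ∨ (k : ℕ) = 2 * l - 1 := by omega
  · rw [show k = ⟨2 * l - 2, by omega⟩ from Fin.ext hk, hlast.1]
  · rw [show k = ⟨2 * l - 1, by omega⟩ from Fin.ext hk, hlast.2]

end Jset

/-- `|J_l| ≤ 2 N^{2l-2}`: given the first `2l-2` coordinates, the last two coordinates are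
determined up to a permutation. -/
theorem stmt1 (N l : ℕ) (hl : 2 ≤ l) :
    (Jset N l).card ≤ 2 * N ^ (2 * l - 2) := by
  let f (x : Fin (2 * l) → Fin N) : (Fin (2 * l - 2) → Fin N) × Bool :=
    (fun i => x (Fin.castLE (by omega) i),
      decide (x ⟨2 * l - 2, by omega⟩ < x ⟨2 * l - 1, by omega⟩))
  have hf : Set.InjOn f (Jset N l) := fun x hx y hy hxy => by
    simp only [f, Prod.mk.injEq, decide_eq_decide, funext_iff] at hxy
    exact Jset.eq_of_eqOn_prefix hl hx hy (fun k hk => hxy.1 ⟨k, hk⟩) hxy.2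
  calc (Jset N l).card ≤ Fintype.card ((Fin (2 * l - 2) → Fin N) × Bool) :=
        card_le_card_of_injOn f (fun _ _ => mem_univ _) hf
    _ = 2 * N ^ (2 * l - 2) := by simp [mul_comm]
end

section
/- If a limiting law of R_N/β_N exists and satisfies the asymptotic factorization lim_{N→∞} |P(R_N > β_N(t+s)) - P(R_N > β_N t) P(R_N > β_N s)| = 0 for all t, s > 0, together with lim_{N→∞} P(R_N ≥ β_N) = e^{-1} and lim_{N→∞} E(R_N/β_N) = 1, then for all real t > 0, lim_{N→∞} P(R_N > β_N t) = e^{-t}. -/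
/-!
The limiting tail `G t = lim P(R_N > β_N t)` is antitone, and the asymptotic factorisation makes
it exactly multiplicative: `G (t + s) = G t * G s`. Comparing with `P(R_N ≥ β_N)` gives
`G ≥ e⁻¹` on `(0, 1)` and `G ≤ e⁻¹` on `(1, ∞)`. In particular `G > 0`, so `-log G` is a monotone
solution of Cauchy's equation on `(0, ∞)`, hence `t ↦ c t`, and the two bounds force `c = 1`.
-/

open MeasureTheory Filter Set Real Topology

section Cauchy

variable {g : ℝ → ℝ}

theorem map_nat_succ_mul_of_add (hadd : ∀ t s, 0 < t → 0 < s → g (t + s) = g t + g s)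
    {t : ℝ} (ht : 0 < t) (n : ℕ) : g ((n + 1) * t) = (n + 1) * g t := by
  induction n with
  | zero => simp
  | succ n ih =>
    push_cast
    rw [show ((n : ℝ) + 1 + 1) * t = (n + 1) * t + t by ring, hadd _ _ (by positivity) ht, ih]
    ring

theorem map_div_nat_succ_of_add (hadd : ∀ t s, 0 < t → 0 < s → g (t + s) = g t + g s)
    (k n : ℕ) : g ((k + 1) / (n + 1)) = g 1 * ((k + 1) / (n + 1)) := by
  have hu : (0 : ℝ) < 1 / (n + 1) := by positivity
  have hone := map_nat_succ_mul_of_add hadd hu n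
  rw [show ((n : ℝ) + 1) * (1 / (n + 1)) = 1 by field_simp] at hone
  rw [show ((k : ℝ) + 1) / (n + 1) = (k + 1) * (1 / (n + 1)) by ring,
    map_nat_succ_mul_of_add hadd hu k, hone]
  field_simp

theorem nonneg_of_add_of_monotoneOn (hadd : ∀ t s, 0 < t → 0 < s → g (t + s) = g t + g s)
    (hmono : MonotoneOn g (Ioi 0)) {t : ℝ} (ht : 0 < t) : 0 ≤ g t := by
  have h := hmono ht (add_pos ht ht) (le_add_of_nonneg_left ht.le)
  rw [hadd t t ht ht] at h
  linarith

theorem exists_div_nat_succ_mem_Ioc {t : ℝ} (ht : 0 ≤ t) (n : ℕ) :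
    ∃ k : ℕ, t < (k + 1) / (n + 1) ∧ (k + 1) / (n + 1) ≤ t + 1 / (n + 1) := by
  refine ⟨⌊(n + 1) * t⌋₊, ?_, ?_⟩
  · rw [lt_div_iff₀ (by positivity), mul_comm]
    exact Nat.lt_floor_add_one _
  · rw [← sub_le_iff_le_add, ← sub_div, div_le_iff₀ (by positivity)]
    linarith [Nat.floor_le (by positivity : 0 ≤ ((n : ℝ) + 1) * t)]

theorem eq_mul_of_add_of_monotoneOn (hadd : ∀ t s, 0 < t → 0 < s → g (t + s) = g t + g s)
    (hmono : MonotoneOn g (Ioi 0)) {t : ℝ} (ht : 0 < t) : g t = g 1 * t := by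
  have hc : 0 ≤ g 1 := nonneg_of_add_of_monotoneOn hadd hmono one_pos
  have hbounds : ∀ n : ℕ, g 1 * t - g 1 * (1 / (n + 1)) ≤ g t ∧
      g t ≤ g 1 * t + g 1 * (1 / (n + 1)) := by
    intro n
    obtain ⟨k, hlt, hle⟩ := exists_div_nat_succ_mem_Ioc ht.le n
    have hu : (0 : ℝ) < 1 / (n + 1) := by positivity
    have hq : (0 : ℝ) < (k + 1) / (n + 1) := by positivity
    have hgu : g (1 / (n + 1)) = g 1 * (1 / (n + 1)) := by
      simpa using map_div_nat_succ_of_add hadd 0 n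
    have hlower := hmono hq (add_pos ht hu) hle
    have hupper := hmono ht hq hlt.le
    rw [hadd t _ ht hu, map_div_nat_succ_of_add hadd, hgu] at hlower
    rw [map_div_nat_succ_of_add hadd] at hupper
    constructor
    · nlinarith [mul_le_mul_of_nonneg_left hlt.le hc]
    · nlinarith [mul_le_mul_of_nonneg_left hle hc]
  have herr : Tendsto (fun n : ℕ => g 1 * (1 / ((n : ℝ) + 1))) atTop (𝓝 0) := by
    simpa using tendsto_one_div_add_atTop_nhds_zero_nat.const_mul (g 1)
  apply le_antisymm
  · exact ge_of_tendsto' (by simpa using tendsto_const_nhds.add herr) fun n => (hbounds n).2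
  · exact le_of_tendsto' (by simpa using tendsto_const_nhds.sub herr) fun n => (hbounds n).1

theorem eq_self_of_add_of_monotoneOn (hadd : ∀ t s, 0 < t → 0 < s → g (t + s) = g t + g s)
    (hmono : MonotoneOn g (Ioi 0)) (hlt : ∀ t ∈ Ioo 0 1, g t ≤ 1) (hgt : ∀ t, 1 < t → 1 ≤ g t)
    {t : ℝ} (ht : 0 < t) : g t = t := by
  suffices hc1 : g 1 = 1 by rw [eq_mul_of_add_of_monotoneOn hadd hmono ht, hc1, one_mul]
  have hc := nonneg_of_add_of_monotoneOn hadd hmono one_pos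
  -- `s` lies on the same side of `1` as `1 / g 1`, where `g s = g 1 * s` violates the bounds.
  set s := 2 / (g 1 + 1) with hs_def
  have hs : 0 < s := by positivity
  have hs_mul : s * (g 1 + 1) = 2 := by rw [hs_def]; field_simp
  have hgs := eq_mul_of_add_of_monotoneOn hadd hmono hs
  rcases lt_trichotomy (g 1) 1 with h | h | h
  · have := hgt s (by nlinarith)
    nlinarith
  · exact h
  · have := hlt s ⟨hs, by nlinarith⟩
    nlinarith

end Cauchy

theorem pos_of_mul_of_pos_on_Ioo {f : ℝ → ℝ}
    (hmul : ∀ t s, 0 < t → 0 < s → f (t + s) = f t * f s) (hpos : ∀ t ∈ Ioo 0 1, 0 < f t)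
    {t : ℝ} (ht : 0 < t) : 0 < f t := by
  obtain ⟨n, hn⟩ := pow_unbounded_of_one_lt t one_lt_two
  induction n generalizing t with
  | zero => exact hpos t ⟨ht, by simpa using hn⟩
  | succ n ih =>
    have hhalf := ih (half_pos ht) (by rw [pow_succ] at hn; linarith)
    rw [← add_halves t, hmul _ _ (half_pos ht) (half_pos ht)]
    positivity

theorem eq_exp_neg_of_mul_of_antitoneOn {f : ℝ → ℝ}
    (hmul : ∀ t s, 0 < t → 0 < s → f (t + s) = f t * f s) (hanti : AntitoneOn f (Ioi 0))
    (hlt : ∀ t ∈ Ioo 0 1, exp (-1) ≤ f t) (hgt : ∀ t, 1 < t → f t ≤ exp (-1))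
    {t : ℝ} (ht : 0 < t) : f t = exp (-t) := by
  have hpos : ∀ s, 0 < s → 0 < f s := fun s hs =>
    pos_of_mul_of_pos_on_Ioo hmul (fun u hu => (exp_pos _).trans_le (hlt u hu)) hs
  have hlog : -log (f t) = t := by
    refine eq_self_of_add_of_monotoneOn (g := fun s => -log (f s)) ?_ ?_ ?_ ?_ ht
    · intro s u hs hu
      rw [hmul s u hs hu, log_mul (hpos s hs).ne' (hpos u hu).ne']
      ring
    · intro s hs u hu hsu
      exact neg_le_neg (log_le_log (hpos u hu) (hanti hs hu hsu))
    · intro s hs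
      rw [neg_le, le_log_iff_exp_le (hpos s hs.1)]
      exact hlt s hs
    · intro s hs
      rw [le_neg, log_le_iff_le_exp (hpos s (one_pos.trans hs))]
      exact hgt s hs
  rw [← exp_log (hpos t ht), ← neg_neg (log (f t)), hlog]

theorem eq_mul_of_tendsto_abs_sub_mul {ι : Type*} {l : Filter ι} [l.NeBot] {a b c : ι → ℝ}
    {x y z : ℝ} (ha : Tendsto a l (𝓝 x)) (hb : Tendsto b l (𝓝 y)) (hc : Tendsto c l (𝓝 z))
    (h : Tendsto (fun i => |a i - b i * c i|) l (𝓝 0)) : x = y * z :=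
  sub_eq_zero.mp <| tendsto_nhds_unique (ha.sub (hb.mul hc))
    ((tendsto_zero_iff_abs_tendsto_zero _).mpr h)

theorem stmt13_general
    (Ω : ℕ → Type*) [∀ N, MeasurableSpace (Ω N)]
    (μ : ∀ N, Measure (Ω N)) [∀ N, IsProbabilityMeasure (μ N)]
    (R : ∀ N, Ω N → ℝ)
    (β : ℕ → ℝ) (hβ : ∀ N, 0 < β N)
    (hlim : ∀ t : ℝ, 0 < t →
      ∃ L : ℝ, Tendsto (fun N => (μ N {ω | β N * t < R N ω}).toReal) atTop (nhds L))
    (hmul : ∀ t s : ℝ, 0 < t → 0 < s →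
      Tendsto (fun N =>
        |(μ N {ω | β N * (t + s) < R N ω}).toReal -
          (μ N {ω | β N * t < R N ω}).toReal * (μ N {ω | β N * s < R N ω}).toReal|)
        atTop (nhds 0))
    (hnorm : Tendsto (fun N => (μ N {ω | β N ≤ R N ω}).toReal) atTop
      (nhds (Real.exp (-1)))) :
    ∀ t : ℝ, 0 < t →
      Tendsto (fun N => (μ N {ω | β N * t < R N ω}).toReal) atTop
        (nhds (Real.exp (-t))) := by
  set G : ℝ → ℝ := fun t => limUnder atTop fun N => (μ N {ω | β N * t < R N ω}).toReal
  have hG : ∀ t, 0 < t →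
      Tendsto (fun N => (μ N {ω | β N * t < R N ω}).toReal) atTop (𝓝 (G t)) :=
    fun t ht => tendsto_nhds_limUnder (hlim t ht)
  have hanti : AntitoneOn G (Ioi 0) := fun t ht s hs hts =>
    le_of_tendsto_of_tendsto' (hG s hs) (hG t ht) fun N =>
      measureReal_mono fun ω hω => (mul_le_mul_of_nonneg_left hts (hβ N).le).trans_lt hω
  have hmulG : ∀ t s, 0 < t → 0 < s → G (t + s) = G t * G s := fun t s ht hs =>
    eq_mul_of_tendsto_abs_sub_mul (hG _ (add_pos ht hs)) (hG t ht) (hG s hs) (hmul t s ht hs)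
  have hlt : ∀ t ∈ Ioo 0 1, exp (-1) ≤ G t := fun t ht =>
    le_of_tendsto_of_tendsto' hnorm (hG t ht.1) fun N =>
      measureReal_mono fun ω hω => (mul_lt_of_lt_one_right (hβ N) ht.2).trans_le hω
  have hgt : ∀ t, 1 < t → G t ≤ exp (-1) := fun t ht =>
    le_of_tendsto_of_tendsto' (hG t (one_pos.trans ht)) hnorm fun N =>
      measureReal_mono fun ω hω => (le_mul_of_one_le_right (hβ N).le ht.le).trans hω.le
  intro t ht
  rw [← eq_exp_neg_of_mul_of_antitoneOn hmulG hanti hlt hgt ht]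
  exact hG t ht

/-- Abstract identification of the exponential limit law. Let `R_N` be nonnegative random
variables and `β_N > 0` normalizing constants, and write `T N t = P(R_N > β_N t)`. If a
limiting law of `R_N / β_N` exists, the tails factorize asymptotically,
`P(R_N ≥ β_N) → e⁻¹`, and `E(R_N / β_N) → 1`, then for all real `t > 0`,
`lim_{N→∞} P(R_N > β_N t) = e^{-t}`. -/
theorem stmt13
    (Ω : ℕ → Type*) [∀ N, MeasurableSpace (Ω N)]
    (μ : ∀ N, Measure (Ω N)) [∀ N, IsProbabilityMeasure (μ N)]
    (R : ∀ N, Ω N → ℝ) (hR : ∀ N ω, 0 ≤ R N ω)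
    (hRmeas : ∀ N, Measurable (R N))
    (β : ℕ → ℝ) (hβ : ∀ N, 0 < β N)
    (hlim : ∀ t : ℝ, 0 < t →
      ∃ L : ℝ, Tendsto (fun N => (μ N {ω | β N * t < R N ω}).toReal) atTop (nhds L))
    (hmul : ∀ t s : ℝ, 0 < t → 0 < s →
      Tendsto (fun N =>
        |(μ N {ω | β N * (t + s) < R N ω}).toReal -
          (μ N {ω | β N * t < R N ω}).toReal * (μ N {ω | β N * s < R N ω}).toReal|)
        atTop (nhds 0))
    (hnorm : Tendsto (fun N => (μ N {ω | β N ≤ R N ω}).toReal) atTop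
      (nhds (Real.exp (-1))))
    (hmean : Tendsto (fun N => ∫ ω, R N ω / β N ∂μ N) atTop (nhds 1)) :
    ∀ t : ℝ, 0 < t →
      Tendsto (fun N => (μ N {ω | β N * t < R N ω}).toReal) atTop
        (nhds (Real.exp (-t))) :=
  stmt13_general Ω μ R β hβ hlim hmul hnorm
end
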